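/- arXiv:math/0404030 — 4 statements merged into one kernel-verified Lean document; each statement's English description precedes it below -/
import Mathlib

section
/- The braid b⁶ = σ_3^{−2} σ_2^{−2} σ_3^{−1} σ_1 σ_2^{2} σ_1^{−4} σ_2^{−1} σ_3 σ_2^{−3} σ_3^{−1} σ_2 σ_1^{−1} Δ_4^2 in the braid group B_4 is not quasipositive. -/
open FreeGroup in
/-- The braid relations on `n` generators. -/
def braidRels (n : ℕ) : Set (FreeGroup (Fin n)) :=
  {r | (∃ i j : Fin n, (i : ℕ) + 1 = (j : ℕ) ∧
          r = of i * of j * of i * (of j * of i * of j)⁻¹) ∨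
       (∃ i j : Fin n, (i : ℕ) + 2 ≤ (j : ℕ) ∧
          r = of i * of j * (of j * of i)⁻¹)}

/-- The braid group `B_{n+1}`, presented with `n` generators `σ_1, …, σ_n`
(so `Braid (m - 1)` is the braid group on `m` strands). -/
def Braid (n : ℕ) : Type := PresentedGroup (braidRels n)

instance (n : ℕ) : Group (Braid n) :=
  inferInstanceAs (Group (PresentedGroup (braidRels n)))

/-- The Artin generator `σ_{i+1}` of the braid group (indices start at `0`,
so `σ 0` is the generator usually written `σ_1`). -/
def σ {n : ℕ} (i : Fin n) : Braid n := PresentedGroup.of i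

/-- A braid is quasipositive if it can be written as a (possibly empty) product
of conjugates `w σ_1 w⁻¹` of the first Artin generator. -/
def Quasipositive {n : ℕ} [NeZero n] (b : Braid n) : Prop :=
  ∃ l : List (Braid n), b = (l.map fun w => w * σ 0 * w⁻¹).prod


/-- `σ_1` in the braid group `B_4`. -/
def σ₁ : Braid 3 := σ 0
/-- `σ_2` in the braid group `B_4`. -/
def σ₂ : Braid 3 := σ 1
/-- `σ_3` in the braid group `B_4`. -/
def σ₃ : Braid 3 := σ 2
/-- The Garside element `Δ_4 = σ_1 σ_2 σ_3 σ_1 σ_2 σ_1` of `B_4`. -/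
def Δ₄ : Braid 3 := σ₁ * σ₂ * σ₃ * σ₁ * σ₂ * σ₁

/-! ### Auxiliary: exponent-sum homomorphism -/

/-- Exponent sum homomorphism to `Multiplicative ℤ`. -/
def expSum : Braid 3 →* Multiplicative ℤ :=
  PresentedGroup.toGroup (f := fun _ => Multiplicative.ofAdd 1)
    (by
      rintro r (⟨i, j, -, rfl⟩ | ⟨i, j, -, rfl⟩) <;>
        simp only [map_mul, map_inv, FreeGroup.lift_apply_of] <;> decide)

lemma expSum_σ (i : Fin 3) : expSum (σ i) = Multiplicative.ofAdd 1 :=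
  PresentedGroup.toGroup.of _

/-! ### Auxiliary: permutation representation on `P²(F₃)` (13 points) -/

def f1 : Equiv.Perm (Fin 13) :=
  ⟨![0,1,2,3,7,8,9,10,11,12,4,5,6], ![0,1,2,3,10,11,12,4,5,6,7,8,9], by decide, by decide⟩
def f2 : Equiv.Perm (Fin 13) :=
  ⟨![0,12,11,10,4,5,6,2,3,1,8,7,9], ![0,9,7,8,4,5,6,11,10,12,3,2,1], by decide, by decide⟩
def f3 : Equiv.Perm (Fin 13) :=
  ⟨![3,1,0,2,4,11,9,7,5,12,10,8,6], ![2,1,3,0,4,8,12,7,11,6,10,5,9], by decide, by decide⟩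

def xp : Equiv.Perm (Fin 13) :=
  ⟨![8,1,5,11,2,4,12,3,10,6,0,7,9], ![10,1,4,7,5,2,9,11,0,12,8,3,6], by decide, by decide⟩

def fgen : Fin 3 → Equiv.Perm (Fin 13) := ![f1, f2, f3]

set_option maxRecDepth 100000 in
lemma fgen_rels : ∀ r ∈ braidRels 3, FreeGroup.lift fgen r = 1 := by
  rintro r (⟨i, j, hij, rfl⟩ | ⟨i, j, hij, rfl⟩) <;>
    fin_cases i <;> fin_cases j <;>
    first
      | exact absurd hij (by decide)
      | (simp only [map_mul, map_inv, FreeGroup.lift_apply_of]; decide)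

/-- Permutation representation of `B₄` on the 13 points of `P²(F₃)`,
obtained from the reduced Burau representation mod 3 at `t = 2`. -/
def ρ : Braid 3 →* Equiv.Perm (Fin 13) :=
  PresentedGroup.toGroup fgen_rels

lemma ρ_σ (i : Fin 3) : ρ (σ i) = fgen i :=
  PresentedGroup.toGroup.of _

def e0 : Equiv.Perm (Fin 13) :=
  ⟨![0,1,2,3,7,8,9,10,11,12,4,5,6], ![0,1,2,3,10,11,12,4,5,6,7,8,9], by decide, by decide⟩
def e1 : Equiv.Perm (Fin 13) :=
  ⟨![0,6,5,4,11,10,12,7,8,9,2,3,1], ![0,12,10,11,3,2,1,7,8,9,5,4,6], by decide, by decide⟩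
def e2 : Equiv.Perm (Fin 13) :=
  ⟨![0,9,8,7,2,3,1,5,4,6,10,11,12], ![0,6,4,5,8,7,9,3,2,1,10,11,12], by decide, by decide⟩
def e3 : Equiv.Perm (Fin 13) :=
  ⟨![0,12,11,10,4,5,6,2,3,1,8,7,9], ![0,9,7,8,4,5,6,11,10,12,3,2,1], by decide, by decide⟩
def e4 : Equiv.Perm (Fin 13) :=
  ⟨![2,1,3,0,10,5,9,4,8,12,7,11,6], ![3,1,0,2,7,5,12,10,8,6,4,11,9], by decide, by decide⟩
def e5 : Equiv.Perm (Fin 13) :=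
  ⟨![3,1,0,2,4,11,9,7,5,12,10,8,6], ![2,1,3,0,4,8,12,7,11,6,10,5,9], by decide, by decide⟩
def e6 : Equiv.Perm (Fin 13) :=
  ⟨![4,12,2,8,5,0,6,7,10,1,3,11,9], ![5,9,2,10,0,4,6,7,3,12,8,11,1], by decide, by decide⟩
def e7 : Equiv.Perm (Fin 13) :=
  ⟨![5,12,7,3,0,4,6,11,8,1,10,2,9], ![4,9,11,3,5,0,6,2,8,12,10,7,1], by decide, by decide⟩
def e8 : Equiv.Perm (Fin 13) :=
  ⟨![7,6,2,11,3,5,12,8,0,9,10,4,1], ![8,12,2,4,11,5,1,0,7,9,10,3,6], by decide, by decide⟩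
def e9 : Equiv.Perm (Fin 13) :=
  ⟨![8,6,10,3,4,2,12,0,7,9,5,11,1], ![7,12,5,3,4,10,1,8,0,9,2,11,6], by decide, by decide⟩
def e10 : Equiv.Perm (Fin 13) :=
  ⟨![10,9,2,5,4,7,1,3,8,6,11,0,12], ![11,6,2,7,4,3,9,5,8,1,0,10,12], by decide, by decide⟩
def e11 : Equiv.Perm (Fin 13) :=
  ⟨![11,9,4,3,8,5,1,7,2,6,0,10,12], ![10,6,8,3,2,5,9,7,4,1,11,0,12], by decide, by decide⟩

/-- The conjugacy class (in the image of `ρ`) of `f1`, as an explicit list. -/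
def C : List (Equiv.Perm (Fin 13)) := [e0,e1,e2,e3,e4,e5,e6,e7,e8,e9,e10,e11]

lemma mem_C_cases {c : Equiv.Perm (Fin 13)} (hc : c ∈ C) :
    c = e0 ∨ c = e1 ∨ c = e2 ∨ c = e3 ∨ c = e4 ∨ c = e5 ∨ c = e6 ∨ c = e7 ∨
    c = e8 ∨ c = e9 ∨ c = e10 ∨ c = e11 := by
  simpa only [C, List.mem_cons, List.not_mem_nil, or_false] using hc

lemma f1_conj : ∀ c ∈ C, f1 * c * f1⁻¹ ∈ C := by
  intro c hc
  rcases mem_C_cases hc with rfl|rfl|rfl|rfl|rfl|rfl|rfl|rfl|rfl|rfl|rfl|rfl <;> decide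

lemma f2_conj : ∀ c ∈ C, f2 * c * f2⁻¹ ∈ C := by
  intro c hc
  rcases mem_C_cases hc with rfl|rfl|rfl|rfl|rfl|rfl|rfl|rfl|rfl|rfl|rfl|rfl <;> decide

lemma f3_conj : ∀ c ∈ C, f3 * c * f3⁻¹ ∈ C := by
  intro c hc
  rcases mem_C_cases hc with rfl|rfl|rfl|rfl|rfl|rfl|rfl|rfl|rfl|rfl|rfl|rfl <;> decide

lemma f1_conj' : ∀ c ∈ C, f1⁻¹ * c * f1 ∈ C := by
  intro c hc
  rcases mem_C_cases hc with rfl|rfl|rfl|rfl|rfl|rfl|rfl|rfl|rfl|rfl|rfl|rfl <;> decide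

lemma f2_conj' : ∀ c ∈ C, f2⁻¹ * c * f2 ∈ C := by
  intro c hc
  rcases mem_C_cases hc with rfl|rfl|rfl|rfl|rfl|rfl|rfl|rfl|rfl|rfl|rfl|rfl <;> decide

lemma f3_conj' : ∀ c ∈ C, f3⁻¹ * c * f3 ∈ C := by
  intro c hc
  rcases mem_C_cases hc with rfl|rfl|rfl|rfl|rfl|rfl|rfl|rfl|rfl|rfl|rfl|rfl <;> decide

/-- The subgroup of permutations normalizing the list `C` under conjugation. -/
def H : Subgroup (Equiv.Perm (Fin 13)) where
  carrier := {π | (∀ c ∈ C, π * c * π⁻¹ ∈ C) ∧ (∀ c ∈ C, π⁻¹ * c * π ∈ C)}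
  one_mem' := by simp
  mul_mem' := by
    rintro a b ⟨ha1, ha2⟩ ⟨hb1, hb2⟩
    constructor
    · intro c hc
      have := ha1 _ (hb1 c hc)
      simpa [mul_assoc] using this
    · intro c hc
      have := hb2 _ (ha2 c hc)
      simpa [mul_assoc] using this
  inv_mem' := by
    rintro a ⟨ha1, ha2⟩
    exact ⟨by simpa using ha2, by simpa using ha1⟩

lemma gen_mem_H (i : Fin 3) : fgen i ∈ H := by
  fin_cases i
  · exact ⟨f1_conj, f1_conj'⟩
  · exact ⟨f2_conj, f2_conj'⟩
  · exact ⟨f3_conj, f3_conj'⟩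

lemma ρ_mem_H (w : Braid 3) : ρ w ∈ H := by
  have htop : Subgroup.closure (Set.range (PresentedGroup.of : Fin 3 → Braid 3)) = ⊤ :=
    PresentedGroup.closure_range_of _
  have hle : Subgroup.closure (Set.range (PresentedGroup.of : Fin 3 → Braid 3)) ≤
      H.comap ρ := by
    refine (Subgroup.closure_le _).2 ?_
    rintro - ⟨i, rfl⟩
    show ρ (σ i) ∈ H
    rw [ρ_σ]
    exact gen_mem_H i
  have hw : w ∈ Subgroup.closure (Set.range (PresentedGroup.of : Fin 3 → Braid 3)) := by
    rw [htop]; exact Subgroup.mem_top w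
  exact hle hw

lemma conj_mem_C (w : Braid 3) : ρ w * f1 * (ρ w)⁻¹ ∈ C :=
  (ρ_mem_H w).1 f1 (by decide)

lemma hfin : ∀ c1 ∈ C, ∀ c2 ∈ C, c1 * c2 ≠ xp := by
  intro c1 hc1 c2 hc2
  rcases mem_C_cases hc1 with rfl|rfl|rfl|rfl|rfl|rfl|rfl|rfl|rfl|rfl|rfl|rfl <;>
  rcases mem_C_cases hc2 with rfl|rfl|rfl|rfl|rfl|rfl|rfl|rfl|rfl|rfl|rfl|rfl <;> decide

set_option maxRecDepth 2000 in
theorem b6_not_quasipositive :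
    ¬ Quasipositive
      ((σ₃ ^ 2)⁻¹ * (σ₂ ^ 2)⁻¹ * σ₃⁻¹ * σ₁ * σ₂ ^ 2 * (σ₁ ^ 4)⁻¹ * σ₂⁻¹ * σ₃ *
        (σ₂ ^ 3)⁻¹ * σ₃⁻¹ * σ₂ * σ₁⁻¹ * Δ₄ ^ 2) := by
  rintro ⟨l, hl⟩
  set b := (σ₃ ^ 2)⁻¹ * (σ₂ ^ 2)⁻¹ * σ₃⁻¹ * σ₁ * σ₂ ^ 2 * (σ₁ ^ 4)⁻¹ * σ₂⁻¹ * σ₃ *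
      (σ₂ ^ 3)⁻¹ * σ₃⁻¹ * σ₂ * σ₁⁻¹ * Δ₄ ^ 2 with hb
  -- exponent sum forces `l.length = 2`
  have h1 : expSum b = Multiplicative.ofAdd (2 : ℤ) := by
    rw [hb]
    simp only [Δ₄, σ₁, σ₂, σ₃, map_mul, map_inv, map_pow, expSum_σ]
    decide
  have h2 : expSum b = Multiplicative.ofAdd (1 : ℤ) ^ l.length := by
    rw [hl, map_list_prod, List.map_map]
    have hall : ∀ x ∈ l.map (expSum ∘ fun w => w * σ 0 * w⁻¹),
        x = Multiplicative.ofAdd (1 : ℤ) := by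
      intro x hx
      simp only [List.mem_map, Function.comp] at hx
      obtain ⟨w, -, rfl⟩ := hx
      simp [map_mul, map_inv, expSum_σ, mul_comm]
    rw [List.prod_eq_pow_card _ _ hall, List.length_map]
  have hlen : l.length = 2 := by
    rw [h1] at h2
    have h3 := congrArg Multiplicative.toAdd h2
    simp only [toAdd_pow, toAdd_ofAdd, nsmul_eq_mul, mul_one] at h3
    exact_mod_cast h3.symm
  obtain ⟨w1, w2, rfl⟩ := List.length_eq_two.1 hlen
  have hσ0 : ρ (σ (0 : Fin 3)) = f1 := ρ_σ 0
  have hρb : ρ b = (ρ w1 * f1 * (ρ w1)⁻¹) * (ρ w2 * f1 * (ρ w2)⁻¹) := by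
    rw [hl]
    simp [map_mul, map_inv, hσ0]
  have hc1 := conj_mem_C w1
  have hc2 := conj_mem_C w2
  have hval : ρ b = xp := by
    rw [hb]
    simp only [Δ₄, σ₁, σ₂, σ₃, map_mul, map_inv, map_pow, ρ_σ]
    decide
  exact hfin _ hc1 _ hc2 (hρb ▸ hval)
end

section
/- The braid b⁷ = σ_3^{−3} σ_1 σ_2^{2} σ_1^{−4} σ_2^{−1} σ_3 σ_1^{−2} σ_2^{−3} σ_3^{−1} σ_2 σ_1^{−1} Δ_4^2 in the braid group B_4 is not quasipositive. -/
/-!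
Send `σ₁, σ₃ ↦ A₁` and `σ₂ ↦ A₂` in `GL₃(𝔽₂)`. Every conjugate of `σ₁` then maps to a
conjugate of `A₁`, hence to a root of its characteristic polynomial `X³ + X + 1`. Since the
exponent sum of `b⁷` is `2`, a quasipositive factorization of `b⁷` has exactly two factors,
so the image of `b⁷` would be a product of two roots of `X³ + X + 1` in `M₃(𝔽₂)`; a finite
check shows that it is not.
-/

open Polynomial

namespace Braid

variable {n : ℕ} {G : Type*} [Group G] (f : Fin n → G)
  (braid : ∀ i j : Fin n, (i : ℕ) + 1 = j → f i * f j * f i = f j * f i * f j)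
  (comm : ∀ i j : Fin n, (i : ℕ) + 2 ≤ j → f i * f j = f j * f i)

def lift : Braid n →* G :=
  PresentedGroup.toGroup (f := f) <| by
    rintro r (⟨i, j, hij, rfl⟩ | ⟨i, j, hij, rfl⟩)
    · simp [braid i j hij]
    · simp [comm i j hij]

@[simp]
theorem lift_σ (i : Fin n) : lift f braid comm (σ i) = f i :=
  PresentedGroup.toGroup.of _

def expSum : Braid n →* Multiplicative ℤ :=
  lift (fun _ => Multiplicative.ofAdd 1) (fun _ _ _ => rfl) (fun _ _ _ => rfl)

@[simp]
theorem expSum_σ (i : Fin n) : expSum (σ i) = Multiplicative.ofAdd 1 := lift_σ ..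

theorem expSum_prod_conj_σ_zero [NeZero n] (l : List (Braid n)) :
    expSum (l.map fun w => w * σ 0 * w⁻¹).prod = Multiplicative.ofAdd (l.length : ℤ) := by
  induction l with
  | nil => simp
  | cons w l ih =>
    simp only [List.map_cons, List.prod_cons, map_mul, ih, map_inv, expSum_σ]
    simp [← ofAdd_add, add_comm]

end Braid

theorem Polynomial.aeval_units_conj {R A : Type*} [CommSemiring R] [Semiring A] [Algebra R A]
    (p : R[X]) (u : Aˣ) (x : A) : aeval (↑u * x * ↑u⁻¹ : A) p = ↑u * aeval x p * ↑u⁻¹ := by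
  simpa [ConjAct.units_smul_def] using
    aeval_algHom_apply (MulSemiringAction.toAlgHom R A (ConjAct.toConjAct u)) x p

namespace B4

local notation "M₃" => Matrix (Fin 3) (Fin 3) (ZMod 2)

def b7 : Braid 3 :=
  (σ₃ ^ 3)⁻¹ * σ₁ * σ₂ ^ 2 * (σ₁ ^ 4)⁻¹ * σ₂⁻¹ * σ₃ * (σ₁ ^ 2)⁻¹ *
    (σ₂ ^ 3)⁻¹ * σ₃⁻¹ * σ₂ * σ₁⁻¹ * Δ₄ ^ 2

theorem expSum_b7 : Braid.expSum b7 = Multiplicative.ofAdd 2 := by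
  simp only [b7, σ₁, σ₂, σ₃, Δ₄, map_mul, map_inv, map_pow, Braid.expSum_σ]
  rfl

def A₁ : GL (Fin 3) (ZMod 2) :=
  ⟨!![0, 0, 1; 1, 0, 1; 0, 1, 0], !![1, 1, 0; 0, 0, 1; 1, 0, 0], by decide, by decide⟩

def A₂ : GL (Fin 3) (ZMod 2) :=
  ⟨!![0, 0, 1; 1, 0, 0; 1, 1, 0], !![0, 1, 0; 0, 1, 1; 1, 0, 0], by decide, by decide⟩

def ρ : Braid 3 →* GL (Fin 3) (ZMod 2) :=
  Braid.lift ![A₁, A₂, A₁] (by decide) (by decide)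

theorem ρ_b7 : (ρ b7 : M₃) = !![1, 1, 0; 0, 1, 0; 1, 1, 1] := by
  simp only [b7, σ₁, σ₂, σ₃, Δ₄, ρ, map_mul, map_inv, map_pow, Braid.lift_σ]
  decide +kernel

noncomputable def cubic : (ZMod 2)[X] := X ^ 3 + X + 1

theorem aeval_A₁_cubic : aeval (A₁ : M₃) cubic = 0 := by
  simp only [cubic, map_add, map_pow, aeval_X, map_one]
  decide

theorem aeval_ρ_conj_σ_zero_cubic (w : Braid 3) :
    aeval (ρ (w * σ 0 * w⁻¹) : M₃) cubic = 0 := by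
  rw [map_mul, map_mul, map_inv, Units.val_mul, Units.val_mul, aeval_units_conj]
  simp [ρ, aeval_A₁_cubic]

theorem mul_ne_ρ_b7 {X Y : M₃} (hX : aeval X cubic = 0) (hY : aeval Y cubic = 0) :
    X * Y ≠ ρ b7 := by
  simp only [cubic, map_add, map_pow, aeval_X, map_one] at hX hY
  intro hXY
  have hX_inv : (X ^ 2 + 1) * X = 1 := by
    rw [add_mul, ← pow_succ, one_mul, eq_neg_of_add_eq_zero_left hX]
    decide
  have hY_eq : Y = (X ^ 2 + 1) * ρ b7 := by rw [← hXY, ← mul_assoc, hX_inv, one_mul]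
  have no_root : ∀ X : M₃, X ^ 3 + X + 1 = 0 →
      ((X ^ 2 + 1) * ρ b7) ^ 3 + (X ^ 2 + 1) * ρ b7 + 1 ≠ 0 := by
    rw [ρ_b7]
    decide +kernel
  exact no_root X hX (hY_eq ▸ hY)

end B4

theorem b7_not_quasipositive :
    ¬ Quasipositive
      ((σ₃ ^ 3)⁻¹ * σ₁ * σ₂ ^ 2 * (σ₁ ^ 4)⁻¹ * σ₂⁻¹ * σ₃ * (σ₁ ^ 2)⁻¹ *
        (σ₂ ^ 3)⁻¹ * σ₃⁻¹ * σ₂ * σ₁⁻¹ * Δ₄ ^ 2) := by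
  rintro ⟨l, hl⟩
  change B4.b7 = _ at hl
  have hlen : l.length = 2 := by
    have := congrArg Braid.expSum hl
    rw [B4.expSum_b7, Braid.expSum_prod_conj_σ_zero] at this
    exact_mod_cast (Multiplicative.ofAdd.injective this).symm
  obtain ⟨w₁, w₂, rfl⟩ := List.length_eq_two.mp hlen
  refine B4.mul_ne_ρ_b7 (B4.aeval_ρ_conj_σ_zero_cubic w₁)
    (B4.aeval_ρ_conj_σ_zero_cubic w₂) ?_
  simp [hl]
end

section
/- The braid b⁸ = σ_2^{−2} σ_3^{−3} σ_1^{−3} σ_2^{−1} σ_3 σ_2^{−3} σ_3^{−1} σ_2 σ_1^{−2} σ_2^{−1} σ_3^{2} σ_2 σ_1 Δ_4^2 in the braid group B_4 is not quasipositive. -/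
/-! Every conjugate of `σ₁` has exponent sum `1` and `b⁸` has exponent sum `2`, so a quasipositive
factorisation of `b⁸` has exactly two factors. Mapping `B₄` to `GL₃(𝔽₃)`, each factor lands in the
12-element orbit of the image of `σ₁` under conjugation by the image of `B₄`, and a finite check
shows that the image of `b⁸` is not a product of two elements of that orbit. -/

open scoped MatrixGroups Pointwise

namespace Braid

variable {n : ℕ}

def exponentSum : Braid n →* Multiplicative ℤ :=
  PresentedGroup.toGroup (f := fun _ => Multiplicative.ofAdd 1) <| by
    rintro r (⟨i, j, -, rfl⟩ | ⟨i, j, -, rfl⟩) <;> simp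

@[simp]
theorem exponentSum_σ (i : Fin n) : exponentSum (σ i) = Multiplicative.ofAdd 1 :=
  PresentedGroup.toGroup.of _

theorem exponentSum_conj (w : Braid n) (i : Fin n) :
    exponentSum (w * σ i * w⁻¹) = Multiplicative.ofAdd 1 := by
  simp [mul_inv_cancel_comm]

theorem conj_mem_of_forall_σ {M : Type*} [Monoid M] (φ : Braid n →* Mˣ) {C : Set M}
    (hC : C.Finite) (hσ : ∀ i, ∀ c ∈ C, ↑(φ (σ i)) * c * ↑(φ (σ i))⁻¹ ∈ C) (w : Braid n)
    {c : M} (hc : c ∈ C) : ↑(φ w) * c * ↑(φ w)⁻¹ ∈ C := by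
  let S : Subgroup (Braid n) :=
    (MulAction.stabilizer (ConjAct Mˣ) C).comap (ConjAct.toConjAct.toMonoidHom.comp φ)
  have hw : ConjAct.toConjAct (φ w) • C = C := by
    refine PresentedGroup.generated_by _ S (fun i => ?_) w
    have hsub : ConjAct.toConjAct (φ (σ i)) • C ⊆ C := by
      rintro _ ⟨c, hc, rfl⟩
      exact hσ i c hc
    exact Set.eq_of_subset_of_ncard_le hsub (Set.ncard_smul_set _ _).ge hC
  rw [← hw]
  exact Set.smul_mem_smul_set (a := ConjAct.toConjAct (φ w)) hc

theorem _root_.Quasipositive.exists_prod_eq [NeZero n] {M : Type*} [Monoid M]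
    (φ : Braid n →* Mˣ) {C : Set M} (h0 : ↑(φ (σ 0)) ∈ C)
    (hC : ∀ w, ∀ c ∈ C, ↑(φ w) * c * ↑(φ w)⁻¹ ∈ C) {b : Braid n} (hb : Quasipositive b) :
    ∃ l : List M, (∀ x ∈ l, x ∈ C) ∧ (l.length : ℤ) = (exponentSum b).toAdd ∧ ↑(φ b) = l.prod := by
  obtain ⟨ws, rfl⟩ := hb
  refine ⟨ws.map fun w => ↑(φ w) * ↑(φ (σ 0)) * ↑(φ w)⁻¹, ?_, ?_, ?_⟩
  · simp only [List.mem_map]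
    rintro _ ⟨w, -, rfl⟩
    exact hC w _ h0
  · simp [map_list_prod, List.map_map, Function.comp_def, exponentSum_conj]
  · rw [← Units.coeHom_apply, map_list_prod, map_list_prod]
    simp [List.map_map, Function.comp_def]

end Braid

/-- The transposed reduced Burau matrices at `t = -1`, reduced mod `3`; transposing preserves the
braid relations since they are palindromic. -/
def burauMod3Gen : Fin 3 → GL (Fin 3) (ZMod 3) :=
  ![⟨!![1,0,0;1,1,0;0,0,1], !![1,0,0;2,1,0;0,0,1], by decide, by decide⟩,
    ⟨!![1,2,0;0,1,0;0,1,1], !![1,1,0;0,1,0;0,2,1], by decide, by decide⟩,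
    ⟨!![1,0,0;0,1,2;0,0,1], !![1,0,0;0,1,1;0,0,1], by decide, by decide⟩]

def burauMod3 : Braid 3 →* GL (Fin 3) (ZMod 3) :=
  PresentedGroup.toGroup (f := burauMod3Gen) <| by
    rintro r (⟨i, j, hij, rfl⟩ | ⟨i, j, hij, rfl⟩) <;> fin_cases i <;> fin_cases j <;>
      simp at hij <;> simp [burauMod3Gen, Units.ext_iff] <;> decide

theorem burauMod3_σ (i : Fin 3) : burauMod3 (σ i) = burauMod3Gen i :=
  PresentedGroup.toGroup.of _

/-- The orbit of `burauMod3 (σ 0)` under conjugation by the image of `burauMod3`. -/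
def sigmaOneOrbit : List (Matrix (Fin 3) (Fin 3) (ZMod 3)) :=
  [!![0,2,0;1,2,0;1,1,1], !![0,2,1;2,0,1;1,1,0], !![0,2,2;0,1,0;1,1,2], !![1,0,0;0,1,2;0,0,1],
   !![1,0,0;1,1,0;0,0,1], !![1,0,0;2,1,1;0,0,1], !![1,2,0;0,1,0;0,1,1], !![1,2,1;0,2,2;0,1,0],
   !![1,2,2;0,0,2;0,1,2], !![2,2,0;1,0,0;2,1,1], !![2,2,1;0,1,0;2,1,0], !![2,2,2;2,2,1;2,1,2]]

set_option maxRecDepth 40000 in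
theorem conj_burauMod3_σ_mem (i : Fin 3) :
    ∀ c ∈ sigmaOneOrbit,
      Units.val (burauMod3 (σ i)) * c * Units.val (burauMod3 (σ i))⁻¹ ∈ sigmaOneOrbit := by
  rw [burauMod3_σ]
  intro c hc
  fin_cases i <;> fin_cases hc <;> decide

def b8 : Braid 3 :=
  (σ₂ ^ 2)⁻¹ * (σ₃ ^ 3)⁻¹ * (σ₁ ^ 3)⁻¹ * σ₂⁻¹ * σ₃ * (σ₂ ^ 3)⁻¹ * σ₃⁻¹ * σ₂ *
    (σ₁ ^ 2)⁻¹ * σ₂⁻¹ * σ₃ ^ 2 * σ₂ * σ₁ * Δ₄ ^ 2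

theorem exponentSum_b8 : (Braid.exponentSum b8).toAdd = 2 := by
  simp [b8, Δ₄, σ₁, σ₂, σ₃]

set_option maxRecDepth 40000 in
theorem burauMod3_b8 :
    (burauMod3 b8 : Matrix (Fin 3) (Fin 3) (ZMod 3)) = !![1,1,2;1,0,2;0,2,2] := by
  simp only [b8, Δ₄, σ₁, σ₂, σ₃, map_mul, map_inv, map_pow, burauMod3_σ]
  decide

set_option maxRecDepth 40000 in
theorem mul_ne_burauMod3_b8 :
    ∀ x ∈ sigmaOneOrbit, ∀ y ∈ sigmaOneOrbit, x * y ≠ burauMod3 b8 := by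
  rw [burauMod3_b8]
  intro x hx y hy
  fin_cases hx <;> fin_cases hy <;> decide

theorem b8_not_quasipositive :
    ¬ Quasipositive
      ((σ₂ ^ 2)⁻¹ * (σ₃ ^ 3)⁻¹ * (σ₁ ^ 3)⁻¹ * σ₂⁻¹ * σ₃ * (σ₂ ^ 3)⁻¹ * σ₃⁻¹ * σ₂ *
        (σ₁ ^ 2)⁻¹ * σ₂⁻¹ * σ₃ ^ 2 * σ₂ * σ₁ * Δ₄ ^ 2) := by
  intro hb
  obtain ⟨l, hlC, hlen, hprod⟩ := Quasipositive.exists_prod_eq (b := b8) burauMod3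
    (C := {c | c ∈ sigmaOneOrbit}) (by rw [burauMod3_σ]; decide)
    (Braid.conj_mem_of_forall_σ burauMod3 sigmaOneOrbit.finite_toSet conj_burauMod3_σ_mem) hb
  rw [exponentSum_b8] at hlen
  obtain ⟨x, y, rfl⟩ := List.length_eq_two.mp (by exact_mod_cast hlen)
  exact mul_ne_burauMod3_b8 x (hlC x (by simp)) y (hlC y (by simp))
    (hprod.trans List.prod_pair).symm
end

section
/- For every pair (α,β) in the set {(4,1),(2,3)}, the braid b¹⁰_{α,β} = σ_3^{−1} σ_2^{−1} σ_1^{−1} σ_3^{−(1+β)} σ_2^{−1} σ_3 σ_2^{−α} σ_3^{−1} σ_2 σ_1^{−3} σ_3 σ_2 σ_1 σ_3^{−1} Δ_4^2 in the braid group B_4 is not quasipositive. -/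
/-!
If `b = ∏_{i<k} gᵢ σ₁ gᵢ⁻¹` and `ρ` is a linear representation in which `ρ σ₁ - 1` has rank one,
then `ρ b - 1` has rank at most `k`, since `AB - 1 = (A - 1)B + (B - 1)`; and `k` is the exponent
sum `e(b)`. Both braids have `e(b) = 2`, yet for the reduced Burau representation `ρ` of `B_4`
at `t = 2` over `𝔽₇` the matrix `ρ b - 1` is invertible. (Up to a unit, `det (ρ_t b - 1)` is
`1 + t + t² + t³` times the Alexander polynomial of the closure of `b`.)
-/

open Matrix

theorem Matrix.rank_add_le {K : Type*} [Field K] {m n : Type*} [Fintype n]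
    (A B : Matrix m n K) : (A + B).rank ≤ A.rank + B.rank := by
  have hrange : LinearMap.range (A + B).mulVecLin ≤
      LinearMap.range A.mulVecLin ⊔ LinearMap.range B.mulVecLin := by
    rintro _ ⟨x, rfl⟩
    rw [mulVecLin_add, LinearMap.add_apply]
    exact Submodule.add_mem_sup ⟨x, rfl⟩ ⟨x, rfl⟩
  exact (Submodule.finrank_mono hrange).trans
    (Submodule.finrank_add_le_finrank_add_finrank _ _)

def exponentSum (n : ℕ) : Braid n →* Multiplicative ℤ :=
  PresentedGroup.toGroup (f := fun _ => Multiplicative.ofAdd 1) <| by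
    rintro r (⟨i, j, -, rfl⟩ | ⟨i, j, -, rfl⟩) <;> simp

theorem exponentSum_σ {n : ℕ} (i : Fin n) : exponentSum n (σ i) = Multiplicative.ofAdd 1 :=
  PresentedGroup.toGroup.of _

theorem exponentSum_list_prod_conj {n : ℕ} (s : Fin n) (l : List (Braid n)) :
    exponentSum n (l.map fun w => w * σ s * w⁻¹).prod = Multiplicative.ofAdd (l.length : ℤ) := by
  induction l with
  | nil => rfl
  | cons w l ih =>
    simp only [List.map_cons, List.prod_cons, map_mul, map_inv, ih, exponentSum_σ,
      mul_inv_cancel_comm, List.length_cons, ← ofAdd_add]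
    push_cast
    rw [add_comm]

section RankOfConjugates

variable {K : Type*} [Field K] {ι : Type*} [Fintype ι] [DecidableEq ι]

theorem rank_conj_sub_one (g s : GL ι K) :
    ((↑(g * s * g⁻¹) : Matrix ι ι K) - 1).rank = ((s : Matrix ι ι K) - 1).rank := by
  have h : (↑(g * s * g⁻¹) : Matrix ι ι K) - 1 =
      g * ((s : Matrix ι ι K) - 1) * ((g⁻¹ : GL ι K) : Matrix ι ι K) := by
    rw [mul_sub, sub_mul, mul_one, Units.mul_inv, Units.val_mul, Units.val_mul]
  rw [h, rank_mul_eq_left_of_isUnit_det _ _ (isUnits_det_units _),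
    rank_mul_eq_right_of_isUnit_det _ _ (isUnits_det_units _)]

theorem rank_mul_sub_one_le (A B : GL ι K) :
    ((↑(A * B) : Matrix ι ι K) - 1).rank ≤
      ((A : Matrix ι ι K) - 1).rank + ((B : Matrix ι ι K) - 1).rank := by
  have h : (↑(A * B) : Matrix ι ι K) - 1 =
      ((A : Matrix ι ι K) - 1) * B + ((B : Matrix ι ι K) - 1) := by
    rw [Units.val_mul, sub_mul, one_mul, sub_add_sub_cancel]
  rw [h]
  exact (rank_add_le _ _).trans (Nat.add_le_add_right (rank_mul_le_left _ _) _)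

theorem rank_list_prod_conj_sub_one_le (s : GL ι K) (l : List (GL ι K)) :
    ((↑(l.map fun g => g * s * g⁻¹).prod : Matrix ι ι K) - 1).rank ≤
      l.length * ((s : Matrix ι ι K) - 1).rank := by
  induction l with
  | nil => simp
  | cons g l ih =>
    rw [List.map_cons, List.prod_cons, List.length_cons, Nat.succ_mul, add_comm _ (rank _)]
    refine (rank_mul_sub_one_le _ _).trans ?_
    rw [rank_conj_sub_one]
    exact Nat.add_le_add_left ih _

theorem Quasipositive.rank_sub_one_le {n : ℕ} [NeZero n] {b : Braid n} (hb : Quasipositive b)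
    (ρ : Braid n →* GL ι K) :
    (((ρ b : Matrix ι ι K) - 1).rank : ℤ) ≤
      Multiplicative.toAdd (exponentSum n b) * ((ρ (σ 0) : Matrix ι ι K) - 1).rank := by
  obtain ⟨l, rfl⟩ := hb
  have h : ρ (l.map fun w => w * σ 0 * w⁻¹).prod =
      ((l.map ρ).map fun g => g * ρ (σ 0) * g⁻¹).prod := by
    simp [map_list_prod, List.map_map, Function.comp_def]
  rw [exponentSum_list_prod_conj, toAdd_ofAdd, h]
  exact_mod_cast (rank_list_prod_conj_sub_one_le _ _).trans_eq (by rw [List.length_map])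

end RankOfConjugates

section Burau

variable {R : Type*} [CommRing R]

def reducedBurauGen (t : Rˣ) : Fin 3 → GL (Fin 3) R
  | 0 => ⟨!![-t, 1, 0; 0, 1, 0; 0, 0, 1], !![-↑t⁻¹, ↑t⁻¹, 0; 0, 1, 0; 0, 0, 1],
      by simp [one_fin_three], by simp [one_fin_three]⟩
  | 1 => ⟨!![1, 0, 0; t, -t, 1; 0, 0, 1], !![1, 0, 0; 1, -↑t⁻¹, ↑t⁻¹; 0, 0, 1],
      by simp [one_fin_three], by simp [one_fin_three]⟩
  | 2 => ⟨!![1, 0, 0; 0, 1, 0; 0, t, -t], !![1, 0, 0; 0, 1, 0; 0, 1, -↑t⁻¹],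
      by simp [one_fin_three], by simp [one_fin_three]⟩

theorem reducedBurauGen_braidRels (t : Rˣ) :
    ∀ r ∈ braidRels 3, FreeGroup.lift (reducedBurauGen t) r = 1 := by
  rintro r (⟨i, j, hij, rfl⟩ | ⟨i, j, hij, rfl⟩) <;>
    fin_cases i <;> fin_cases j <;> simp at hij <;>
    simp only [map_mul, map_inv, FreeGroup.lift_apply_of, mul_inv_eq_one] <;>
    ext : 1 <;> simp [reducedBurauGen]

def reducedBurau (t : Rˣ) : Braid 3 →* GL (Fin 3) R :=
  PresentedGroup.toGroup (reducedBurauGen_braidRels t)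

theorem reducedBurau_σ (t : Rˣ) (i : Fin 3) : reducedBurau t (σ i) = reducedBurauGen t i :=
  PresentedGroup.toGroup.of _

end Burau

theorem rank_reducedBurau_σ_zero_sub_one_le {K : Type*} [Field K] (t : Kˣ) :
    ((reducedBurau t (σ 0) : Matrix (Fin 3) (Fin 3) K) - 1).rank ≤ 1 := by
  have h : (reducedBurau t (σ 0) : Matrix (Fin 3) (Fin 3) K) - 1 =
      vecMulVec ![1, 0, 0] ![-(t : K) - 1, 1, 0] := by
    ext i j
    fin_cases i <;> fin_cases j <;> simp [reducedBurau_σ, reducedBurauGen, one_fin_three]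
  rw [h]
  exact rank_vecMulVec_le _ _

theorem not_quasipositive_of_det_reducedBurau_sub_one_ne_zero {K : Type*} [Field K] (t : Kˣ)
    {b : Braid 3} (he : Multiplicative.toAdd (exponentSum 3 b) < 3)
    (hdet : ((reducedBurau t b : Matrix (Fin 3) (Fin 3) K) - 1).det ≠ 0) :
    ¬ Quasipositive b := by
  intro hb
  have hrank := hb.rank_sub_one_le (reducedBurau t)
  rw [rank_of_det_ne_zero hdet, Fintype.card_fin] at hrank
  set e := Multiplicative.toAdd (exponentSum 3 b)
  set r := ((reducedBurau t (σ 0) : Matrix (Fin 3) (Fin 3) K) - 1).rank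
  have hr : (r : ℤ) ≤ 1 := by exact_mod_cast rank_reducedBurau_σ_zero_sub_one_le t
  push_cast at hrank
  linarith [mul_nonneg (show (0 : ℤ) ≤ 2 - e by omega) (Int.natCast_nonneg r)]

instance Nat.fact_prime_seven : Fact (Nat.Prime 7) := ⟨by norm_num⟩

theorem b10_not_quasipositive :
    ∀ α β : ℕ, (α, β) ∈ ({(4,1),(2,3)} : Set (ℕ × ℕ)) →
      ¬ Quasipositive
        (σ₃⁻¹ * σ₂⁻¹ * σ₁⁻¹ * (σ₃ ^ (1 + β))⁻¹ * σ₂⁻¹ * σ₃ * (σ₂ ^ α)⁻¹ * σ₃⁻¹ *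
          σ₂ * (σ₁ ^ 3)⁻¹ * σ₃ * σ₂ * σ₁ * σ₃⁻¹ * Δ₄ ^ 2) := by
  intro α β hαβ
  simp only [Set.mem_insert_iff, Set.mem_singleton_iff, Prod.mk.injEq] at hαβ
  -- Over `𝔽₇`, with `t = 2`, both side conditions are finite computations.
  rcases hαβ with ⟨rfl, rfl⟩ | ⟨rfl, rfl⟩ <;>
    refine not_quasipositive_of_det_reducedBurau_sub_one_ne_zero (K := ZMod 7)
      ⟨2, 4, rfl, rfl⟩ ?_ ?_ <;>
    simp only [σ₁, σ₂, σ₃, Δ₄, map_mul, map_inv, map_pow, exponentSum_σ, reducedBurau_σ,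
      det_fin_three] <;>
    decide
end
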